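/- Let G be a simple graph and let v be a vertex of G of degree at least 3. If x_0, x_1, x_2 are interior points of three distinct edges of G incident with v, then every arc α in |G| containing {x_0, x_1, x_2} has v as an interior point of α, and at least one endpoint of α lies in [v,x_0] ∪ [v,x_1] ∪ [v,x_2]. -/

import Mathlib

open Topology

noncomputable section

variable {V : Type*}

open Classical in
/-- The Dirac function marking a vertex: the point of `|G|` corresponding to vertex `v`. -/
noncomputable def vertexPoint (v : V) : V → ℝ := fun u => if u = v then 1 else 0

open Classical in
/-- The point of `|G|` lying on the edge `vw` at parameter `t` (measured from `v` towards `w`). -/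
noncomputable def edgePoint (v w : V) (t : ℝ) : V → ℝ :=
  fun u => (if u = v then 1 - t else 0) + (if u = w then t else 0)

/-- The geometric realization `|G|` of a simple graph `G`, realized as the set of
formal convex combinations of adjacent pairs of vertices; each closed edge carries
its usual topology as a copy of `[0,1]`. -/
def GraphRealization (G : SimpleGraph V) : Set (V → ℝ) :=
  {x | (∃ v, x = vertexPoint v) ∨
    ∃ v w t, G.Adj v w ∧ t ∈ Set.Icc (0 : ℝ) 1 ∧ x = edgePoint v w t}

/-- A subset of a topological space is an arc if it is homeomorphic to `[0,1]`. -/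
def IsArc {X : Type*} [TopologicalSpace X] (A : Set X) : Prop :=
  Nonempty (↥A ≃ₜ ↥unitInterval)

/-- A space is `n`-arc connected if any at most `n` points lie on a common arc. -/
def NArcConn (X : Type*) [TopologicalSpace X] (n : ℕ) : Prop :=
  ∀ S : Finset X, S.card ≤ n → ∃ A : Set X, IsArc A ∧ ↑S ⊆ A

/-- The unit circle in the plane. -/
def unitCircleSet : Set (ℝ × ℝ) := {p | p.1 ^ 2 + p.2 ^ 2 = 1}

/-- A subset of a topological space is a simple closed curve if homeomorphic to the circle. -/
def IsSimpleClosedCurve {X : Type*} [TopologicalSpace X] (C : Set X) : Prop :=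
  Nonempty (↥C ≃ₜ ↥unitCircleSet)

/-- A space is `n`-circle connected if any at most `n` points lie on a common
simple closed curve. -/
def NCircleConn (X : Type*) [TopologicalSpace X] (n : ℕ) : Prop :=
  ∀ S : Finset X, S.card ≤ n → ∃ C : Set X, IsSimpleClosedCurve C ∧ ↑S ⊆ C

/-- A space is `n`-strongly arc connected if any list of at most `n` points is contained
in an arc, the points appearing along the arc in the listed order. -/
def NStrongArcConn (X : Type*) [TopologicalSpace X] (n : ℕ) : Prop :=
  ∀ l : List X, l.length ≤ n →
    ∃ f : ↥unitInterval → X, Topology.IsEmbedding f ∧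
      ∃ t : Fin l.length → ↥unitInterval, Monotone t ∧ ∀ i, f (t i) = l.get i

/-- A graph is `k`-connected if removing fewer than `k` vertices leaves it connected. -/
def KConnected (G : SimpleGraph V) (k : ℕ) : Prop :=
  ∀ S : Set V, S.encard < (k : ℕ∞) → (G.induce (Sᶜ : Set V)).Connected

/-- A graph is cyclically connected if any two vertices lie on a common cycle. -/
def CyclicallyConnected (G : SimpleGraph V) : Prop :=
  ∀ v w : V, ∃ (u : V) (c : G.Walk u u), c.IsCycle ∧ v ∈ c.support ∧ w ∈ c.support

/-- The circle of radius `r` centered at `c` in the plane. -/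
def circleAt (c : ℝ × ℝ) (r : ℝ) : Set (ℝ × ℝ) :=
  {p | (p.1 - c.1) ^ 2 + (p.2 - c.2) ^ 2 = r ^ 2}

/-- The horizontal segment at height `y` from abscissa `a` to `b`. -/
def hSeg (y a b : ℝ) : Set (ℝ × ℝ) := {p | p.2 = y ∧ a ≤ p.1 ∧ p.1 ≤ b}

/-- The θ-curve: unit circle together with horizontal diameter. -/
def thetaSet : Set (ℝ × ℝ) := circleAt (0, 0) 1 ∪ hSeg 0 (-1) 1

/-- Figure-eight: two unit circles meeting at the origin. -/
def figureEightSet : Set (ℝ × ℝ) := circleAt (-1, 0) 1 ∪ circleAt (1, 0) 1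

/-- Lollipop: unit circle with the segment from `(1,0)` to `(2,0)` attached. -/
def lollipopSet : Set (ℝ × ℝ) := circleAt (0, 0) 1 ∪ hSeg 0 1 2

/-- Lollipop with its free endpoint removed. -/
def openLollipopSet : Set (ℝ × ℝ) := lollipopSet \ {(2, 0)}

/-- Dumbbell: two disjoint unit circles joined by a segment. -/
def dumbbellSet : Set (ℝ × ℝ) := circleAt (-2, 0) 1 ∪ circleAt (2, 0) 1 ∪ hSeg 0 (-1) 1

/-- Happy-face curve: two circles meeting at a point, joined by a further arc. -/
def happyFaceSet : Set (ℝ × ℝ) :=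
  circleAt (-1, 0) 1 ∪ circleAt (1, 0) 1 ∪ {p | p.1 ^ 2 + p.2 ^ 2 = 4 ∧ p.2 ≤ 0}

/-- Baguette curve: two disjoint circles joined by two disjoint arcs. -/
def baguetteSet : Set (ℝ × ℝ) :=
  circleAt (-3, 0) 1 ∪ circleAt (3, 0) 1 ∪ hSeg 0 (-2) 2 ∪ hSeg 1 (-3) 3

/-- A graph is a basic 4-ac graph iff its realization is homeomorphic to a circle,
a θ-curve, a happy-face curve or a baguette curve (this captures precisely the
subdivisions of those four graphs). -/
def IsBasicFourAC {W : Type*} (H : SimpleGraph W) : Prop :=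
  Nonempty (↥(GraphRealization H) ≃ₜ ↥unitCircleSet) ∨
  Nonempty (↥(GraphRealization H) ≃ₜ ↥thetaSet) ∨
  Nonempty (↥(GraphRealization H) ≃ₜ ↥happyFaceSet) ∨
  Nonempty (↥(GraphRealization H) ≃ₜ ↥baguetteSet)

/-- A chain-graph decomposition of the connected graph `G`: links indexed by an
interval `J` of `ℤ`, non-consecutive links are disjoint, consecutive links share
exactly one vertex. -/
structure IsChainGraph (G : SimpleGraph V) (J : Set ℤ) (L : ℤ → G.Subgraph) : Prop where
  connected : G.Connected
  ordConnected : J.OrdConnected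
  nonempty : J.Nonempty
  cover : (⨆ i ∈ J, L i) = (⊤ : G.Subgraph)
  sep : ∀ i ∈ J, ∀ j ∈ J, i + 1 < j → (L i).verts ∩ (L j).verts = ∅
  link : ∀ i ∈ J, i + 1 ∈ J → ∃ v, (L i).verts ∩ (L (i + 1)).verts = {v}

/-- A cut-vertex: a vertex whose removal disconnects the graph. -/
def IsCutVertex (G : SimpleGraph V) (v : V) : Prop :=
  ¬ (G.induce ({v}ᶜ : Set V)).Connected

/-- A block: a maximal 2-connected subgraph. -/
def IsBlock (G : SimpleGraph V) (H : G.Subgraph) : Prop :=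
  KConnected H.coe 2 ∧ ∀ H' : G.Subgraph, H ≤ H' → KConnected H'.coe 2 → H' = H

/-- The block graph of `G`: the bipartite graph on cut-vertices and blocks, a cut-vertex
being adjacent to the blocks containing it. -/
def BlockGraph (G : SimpleGraph V) :
    SimpleGraph ({v : V // IsCutVertex G v} ⊕ {H : G.Subgraph // IsBlock G H}) :=
  SimpleGraph.fromRel fun a b =>
    ∃ (c : {v : V // IsCutVertex G v}) (B : {H : G.Subgraph // IsBlock G H}),
      a = Sum.inl c ∧ b = Sum.inr B ∧ (c : V) ∈ (B : G.Subgraph).verts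

/-- An `A`–`B` path: a path starting in `A`, ending in `B` and meeting `A ∪ B` only
in these two endvertices. -/
structure ABPath (G : SimpleGraph V) (A B : Set V) where
  first : V
  last : V
  walk : G.Walk first last
  isPath : walk.IsPath
  firstA : first ∈ A
  lastB : last ∈ B
  meetA : ∀ v ∈ walk.support, v ∈ A → v = first
  meetB : ∀ v ∈ walk.support, v ∈ B → v = last

/-- A family of pairwise vertex-disjoint paths. -/
def PathFamilyDisjoint {G : SimpleGraph V} {A B : Set V} {k : ℕ}
    (P : Fin k → ABPath G A B) : Prop :=
  ∀ i j, i ≠ j → ∀ v, v ∈ (P i).walk.support → v ∉ (P j).walk.support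

/-- The set of vertices used by a family of paths. -/
def familySupport {G : SimpleGraph V} {A B : Set V} {k : ℕ}
    (P : Fin k → ABPath G A B) : Set V :=
  {v | ∃ i, v ∈ (P i).walk.support}

/-- The set of edges used by a family of paths. -/
def familyEdges {G : SimpleGraph V} {A B : Set V} {k : ℕ}
    (P : Fin k → ABPath G A B) : Set (Sym2 V) :=
  {e | ∃ i, e ∈ (P i).walk.edges}

/-- A walk `W` (with no repeated edges) is alternating with respect to the disjoint
path family `P`: it starts in `A` off the paths; repeated vertices lie on paths of the
family; upon hitting a path by a new edge it follows that path backwards for at least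
one edge; and it traverses edges of paths of the family only backwards. -/
structure IsAlternatingWalk {G : SimpleGraph V} {A B : Set V} {k : ℕ}
    (P : Fin k → ABPath G A B) {x y : V} (W : G.Walk x y) : Prop where
  trail : W.IsTrail
  startA : x ∈ A
  startOff : x ∉ familySupport P
  repeats : ∀ v, List.Duplicate v W.support → v ∈ familySupport P
  follows : ∀ (i : ℕ) (hi : i < W.darts.length) (j : Fin k),
      (W.darts.get ⟨i, hi⟩).snd ∈ (P j).walk.support →
      (W.darts.get ⟨i, hi⟩).edge ∉ (P j).walk.edges →
      ∃ h : i + 1 < W.darts.length, (W.darts.get ⟨i + 1, h⟩).symm ∈ (P j).walk.darts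
  backward : ∀ d ∈ W.darts, ∀ j : Fin k,
      d.edge ∈ (P j).walk.edges → d.symm ∈ (P j).walk.darts

end

/-!
Parametrize the arc by `F : [0,1] → |G|` and pick `P i` with `F (P i) = xᵢ`. On the component
of `F⁻¹ [v, xᵢ]` containing `P i`, let `q i` be the point whose image is closest to `v`. If
`F (q i) ≠ v`, then `q i` is an end of the arc: otherwise, near `q i` the arc runs injectively,
hence monotonically, along the open edge, and could be followed further towards `v` inside
`[v, xᵢ]`.

Distinct edges at `v` meet only in `v`. So the `q i` with `F (q i) ≠ v` are distinct ends of the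
arc, while the `q i` with `F (q i) = v` all equal the preimage `p` of `v`, and the corresponding
`P i` lie pairwise on opposite sides of `p`. Each kind therefore occurs at most twice among the
three indices; and if `p` were an end of the arc, two of the three `q i` would coincide, forcing
both to be of the second kind and `p` to lie strictly between two points of the arc.
-/

open Set Function

lemma exists_ne_apply_eq_of_forall_eq_or_eq {β : Type*} (x : Fin 3 → β) {a b : β}
    (h : ∀ i, x i = a ∨ x i = b) : ∃ i j, i ≠ j ∧ x i = x j := by
  classical
  obtain ⟨i, -, j, -, hij, hx⟩ := Finset.exists_ne_map_eq_of_card_lt_of_maps_to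
    (s := Finset.univ) (t := {a, b}) (f := x)
    (Finset.card_le_two.trans_lt (by simp)) (fun i _ => by simpa using h i)
  exact ⟨i, j, hij, hx⟩

section Intervals

variable {α : Type*}

lemma lt_and_lt_or_lt_and_lt_of_uIcc_inter_uIcc_subset [LinearOrder α] {a b p : α}
    (ha : a ≠ p) (hb : b ≠ p) (h : uIcc a p ∩ uIcc b p ⊆ {p}) :
    (a < p ∧ p < b) ∨ (b < p ∧ p < a) := by
  rcases ha.lt_or_gt with ha | ha <;> rcases hb.lt_or_gt with hb | hb
  · have := h ⟨Icc_subset_uIcc ⟨le_max_left a b, max_le ha.le hb.le⟩,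
      Icc_subset_uIcc ⟨le_max_right a b, max_le ha.le hb.le⟩⟩
    exact absurd this (max_lt ha hb).ne
  · exact Or.inl ⟨ha, hb⟩
  · exact Or.inr ⟨hb, ha⟩
  · have := h ⟨Icc_subset_uIcc' ⟨le_min ha.le hb.le, min_le_left a b⟩,
      Icc_subset_uIcc' ⟨le_min ha.le hb.le, min_le_right a b⟩⟩
    exact absurd this (lt_min ha hb).ne'

lemma exists_lt_forall_uIcc_le_of_injOn [ConditionallyCompleteLinearOrder α] [DenselyOrdered α]
    [TopologicalSpace α] [OrderTopology α] {δ : Type*} [LinearOrder δ] [TopologicalSpace δ]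
    [OrderClosedTopology δ] {φ : α → δ} {a b q : α} (hφ : ContinuousOn φ (Icc a b))
    (hinj : InjOn φ (Icc a b)) (ha : a < q) (hb : q < b) :
    ∃ s ∈ Icc a b, φ s < φ q ∧ ∀ x ∈ uIcc s q, φ x ≤ φ q := by
  have hq : q ∈ Icc a b := ⟨ha.le, hb.le⟩
  rcases hφ.strictMonoOn_of_injOn_Icc' (ha.trans hb).le hinj with hmono | hanti
  · refine ⟨a, left_mem_Icc.2 (ha.trans hb).le, hmono (left_mem_Icc.2 (ha.trans hb).le) hq ha,
      fun x hx => ?_⟩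
    rw [uIcc_of_le ha.le] at hx
    exact hmono.monotoneOn ⟨hx.1, hx.2.trans hb.le⟩ hq hx.2
  · refine ⟨b, right_mem_Icc.2 (ha.trans hb).le, hanti hq (right_mem_Icc.2 (ha.trans hb).le) hb,
      fun x hx => ?_⟩
    rw [uIcc_of_ge hb.le] at hx
    exact hanti.antitoneOn hq ⟨ha.le.trans hx.1, hx.2⟩ hx.1

lemma IsClosed.connectedComponentIn [TopologicalSpace α] {A : Set α} (hA : IsClosed A) (x : α) :
    IsClosed (connectedComponentIn A x) := by
  by_cases hx : x ∈ A
  · exact isClosed_of_closure_subset <| isPreconnected_connectedComponentIn.closure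
      |>.subset_connectedComponentIn (subset_closure (mem_connectedComponentIn hx))
      (closure_minimal (connectedComponentIn_subset A x) hA)
  · rw [connectedComponentIn_eq_empty hx]
    exact isClosed_empty

end Intervals

section EdgePoints

variable {V : Type*} {G : SimpleGraph V} {v w w' : V}

lemma edgePoint_apply_left (h : v ≠ w) (t : ℝ) : edgePoint v w t v = 1 - t := by
  simp [edgePoint, h]

lemma edgePoint_apply_right (h : v ≠ w) (t : ℝ) : edgePoint v w t w = t := by
  simp [edgePoint, h.symm]

lemma edgePoint_apply_of_ne {u : V} (hv : u ≠ v) (hw : u ≠ w) (t : ℝ) :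
    edgePoint v w t u = 0 := by
  simp [edgePoint, hv, hw]

lemma edgePoint_zero (v w : V) : edgePoint v w 0 = vertexPoint v := by
  funext u
  by_cases h : u = v <;> by_cases h' : u = w <;> simp [vertexPoint, edgePoint, h, h']

lemma edgePoint_swap (h : v ≠ w) (t : ℝ) : edgePoint v w t = edgePoint w v (1 - t) := by
  funext u
  by_cases h₁ : u = v <;> by_cases h₂ : u = w <;> simp_all [edgePoint]

lemma continuous_edgePoint (v w : V) : Continuous (edgePoint v w) := by
  classical
  refine continuous_pi fun u => ?_
  simp only [edgePoint]
  split_ifs <;> fun_prop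

lemma edgePoint_injective (h : v ≠ w) : Injective (edgePoint v w) := fun r r' hr => by
  simpa [edgePoint_apply_right h] using congrFun hr w

lemma edgePoint_ne_vertexPoint (h : v ≠ w) {r : ℝ} (hr : r ≠ 0) :
    edgePoint v w r ≠ vertexPoint v := by
  rw [← edgePoint_zero v w]
  exact (edgePoint_injective h).ne hr

lemma eq_zero_of_edgePoint_eq (hv : v ≠ w) (hw : w ≠ w') {r r' : ℝ}
    (h : edgePoint v w r = edgePoint v w' r') : r = 0 := by
  simpa [edgePoint_apply_right hv, edgePoint_apply_of_ne hv.symm hw] using congrFun h w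

def openEdge (v w : V) : Set (V → ℝ) := {x | x v ∈ Ioo 0 1 ∧ x w ∈ Ioo 0 1}

lemma isOpen_openEdge (v w : V) : IsOpen (openEdge v w) :=
  (isOpen_Ioo.preimage (continuous_apply v)).inter (isOpen_Ioo.preimage (continuous_apply w))

lemma edgePoint_mem_openEdge (h : v ≠ w) {r : ℝ} (hr : r ∈ Ioo 0 1) :
    edgePoint v w r ∈ openEdge v w := by
  refine ⟨?_, by rwa [edgePoint_apply_right h]⟩
  rw [edgePoint_apply_left h]
  exact ⟨by linarith [hr.2], by linarith [hr.1]⟩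

lemma eq_edgePoint_of_mem_openEdge {x : V → ℝ} (hx : x ∈ GraphRealization G)
    (h : v ≠ w) (hxe : x ∈ openEdge v w) : x = edgePoint v w (x w) := by
  obtain ⟨⟨hv₀, hv₁⟩, hw₀, hw₁⟩ := hxe
  rcases hx with ⟨u, rfl⟩ | ⟨a, b, s, hab, -, rfl⟩
  · simp only [vertexPoint] at hv₀ hv₁
    split_ifs at hv₀ hv₁ <;> linarith
  · have hmem : ∀ u, 0 < edgePoint a b s u → u = a ∨ u = b := fun u hu => by
      by_contra! hne
      simp [edgePoint_apply_of_ne hne.1 hne.2] at hu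
    rcases hmem v hv₀ with rfl | rfl <;> rcases hmem w hw₀ with rfl | rfl
    · exact absurd rfl h
    · rw [edgePoint_apply_right h]
    · rw [edgePoint_apply_left hab.ne, edgePoint_swap hab.ne]
    · exact absurd rfl h

def edgeSegment (v w : V) (t : ℝ) : Set (V → ℝ) := edgePoint v w '' Icc 0 t

lemma isClosed_edgeSegment (v w : V) (t : ℝ) : IsClosed (edgeSegment v w t) :=
  (isCompact_Icc.image (continuous_edgePoint v w)).isClosed

lemma edgePoint_mem_edgeSegment {r t : ℝ} (hr : r ∈ Icc 0 t) :
    edgePoint v w r ∈ edgeSegment v w t :=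
  mem_image_of_mem _ hr

lemma mem_edgeSegment_iff (h : v ≠ w) {t : ℝ} {x : V → ℝ} :
    x ∈ edgeSegment v w t ↔ x w ∈ Icc 0 t ∧ x = edgePoint v w (x w) := by
  constructor
  · rintro ⟨r, hr, rfl⟩
    rw [edgePoint_apply_right h]
    exact ⟨hr, rfl⟩
  · rintro ⟨hr, hx⟩
    exact hx ▸ edgePoint_mem_edgeSegment hr

lemma eq_vertexPoint_of_mem_edgeSegment (hv : v ≠ w) (hw : w ≠ w') {t t' : ℝ} {x : V → ℝ}
    (hx : x ∈ edgeSegment v w t) (hx' : x ∈ edgeSegment v w' t') : x = vertexPoint v := by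
  obtain ⟨r, -, rfl⟩ := hx
  obtain ⟨r', -, hr'⟩ := hx'
  rw [eq_zero_of_edgePoint_eq hv hw hr'.symm, edgePoint_zero]

end EdgePoints

section Arcs

variable {V : Type*} {G : SimpleGraph V} {F : ℝ → V → ℝ} {v w : V}

lemma exists_lt_forall_uIcc_mem_openEdge (hF : Continuous F)
    (hinj : InjOn F (Icc 0 1)) (hFG : ∀ s, F s ∈ GraphRealization G) (hvw : v ≠ w) {q : ℝ}
    (hq : q ∈ Ioo 0 1) (hFq : F q ∈ openEdge v w) :
    ∃ s, F s w < F q w ∧ ∀ x ∈ uIcc s q, x ∈ Icc 0 1 ∧ F x ∈ openEdge v w ∧ F x w ≤ F q w := by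
  obtain ⟨δ, hδ, hball⟩ := Metric.isOpen_iff.1
    (isOpen_Ioo.inter ((isOpen_openEdge v w).preimage hF)) q ⟨hq, hFq⟩
  have hJ : Icc (q - δ / 2) (q + δ / 2) ⊆ Ioo 0 1 ∩ F ⁻¹' openEdge v w := fun x hx =>
    hball <| by
      rw [Metric.mem_ball, Real.dist_eq, abs_sub_lt_iff]
      constructor <;> linarith [hx.1, hx.2]
  have hJinj : InjOn (fun x => F x w) (Icc (q - δ / 2) (q + δ / 2)) := fun x hx y hy hxy => by
    refine hinj (Ioo_subset_Icc_self (hJ hx).1) (Ioo_subset_Icc_self (hJ hy).1) ?_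
    rw [eq_edgePoint_of_mem_openEdge (hFG x) hvw (hJ hx).2,
      eq_edgePoint_of_mem_openEdge (hFG y) hvw (hJ hy).2]
    exact congrArg _ hxy
  obtain ⟨s, hs, hlt, hle⟩ := exists_lt_forall_uIcc_le_of_injOn (q := q)
    ((continuous_apply w).comp hF).continuousOn hJinj (by linarith) (by linarith)
  refine ⟨s, hlt, fun x hx => ?_⟩
  have hxJ := hJ (uIcc_subset_Icc hs ⟨by linarith, by linarith⟩ hx)
  exact ⟨Ioo_subset_Icc_self hxJ.1, hxJ.2, hle x hx⟩

theorem exists_mapsTo_edgeSegment (hF : Continuous F) (hinj : InjOn F (Icc 0 1))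
    (hFG : ∀ s, F s ∈ GraphRealization G) (hvw : v ≠ w) {t P : ℝ} (ht₀ : 0 ≤ t) (ht₁ : t < 1)
    (hP : P ∈ Icc 0 1) (hFP : F P = edgePoint v w t) :
    ∃ q ∈ Icc (0 : ℝ) 1, ∃ u ∈ Icc 0 t, F q = edgePoint v w u ∧
      MapsTo F (uIcc P q) (edgeSegment v w t) ∧ (u = 0 ∨ q = 0 ∨ q = 1) := by
  set A := Icc 0 1 ∩ F ⁻¹' edgeSegment v w t
  have hPA : P ∈ A :=
    ⟨hP, by rw [mem_preimage, hFP]; exact edgePoint_mem_edgeSegment ⟨ht₀, le_rfl⟩⟩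
  set C := connectedComponentIn A P
  have hCA : C ⊆ A := connectedComponentIn_subset A P
  have hC : IsCompact C := isCompact_Icc.of_isClosed_subset
    ((isClosed_Icc.inter ((isClosed_edgeSegment v w t).preimage hF)).connectedComponentIn P)
    (hCA.trans inter_subset_left)
  obtain ⟨q, hqC, hqmin⟩ := hC.exists_isMinOn ⟨P, mem_connectedComponentIn hPA⟩
    ((continuous_apply w).comp hF).continuousOn
  obtain ⟨hq, hqS⟩ := hCA hqC
  obtain ⟨hu, hFq⟩ := (mem_edgeSegment_iff hvw).1 hqS
  refine ⟨q, hq, F q w, hu, hFq, fun x hx => (hCA ?_).2, ?_⟩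
  · exact isPreconnected_connectedComponentIn.ordConnected.uIcc_subset
      (mem_connectedComponentIn hPA) hqC hx
  by_contra! hcon
  -- otherwise the arc continues past `q` inside the open edge, moving closer to `v`
  have hqI : q ∈ Ioo 0 1 := ⟨hq.1.lt_of_ne (Ne.symm hcon.2.1), hq.2.lt_of_ne hcon.2.2⟩
  obtain ⟨s, hlt, hs⟩ := exists_lt_forall_uIcc_mem_openEdge hF hinj hFG hvw hqI
    (hFq ▸ edgePoint_mem_openEdge hvw ⟨hu.1.lt_of_ne (Ne.symm hcon.1), hu.2.trans_lt ht₁⟩)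
  have hsA : uIcc s q ⊆ A := fun x hx => by
    obtain ⟨hx01, hxe, hxq⟩ := hs x hx
    refine ⟨hx01, (mem_edgeSegment_iff hvw).2 ⟨⟨hxe.2.1.le, hxq.trans hu.2⟩, ?_⟩⟩
    exact eq_edgePoint_of_mem_openEdge (hFG x) hvw hxe
  have hsC : s ∈ C := by
    change s ∈ connectedComponentIn A P
    rw [connectedComponentIn_eq hqC]
    exact isPreconnected_uIcc.subset_connectedComponentIn right_mem_uIcc hsA left_mem_uIcc
  exact hlt.not_ge (hqmin hsC)

lemma lt_and_lt_or_of_mapsTo_edgeSegment (hinj : InjOn F (Icc 0 1)) {w' : V} (hvw : v ≠ w)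
    (hww' : w ≠ w') {t t' P P' p : ℝ} (hP : P ∈ Icc 0 1)
    (hp : p ∈ Icc 0 1) (hFp : F p = vertexPoint v) (hPp : P ≠ p) (hP'p : P' ≠ p)
    (hmaps : MapsTo F (uIcc P p) (edgeSegment v w t))
    (hmaps' : MapsTo F (uIcc P' p) (edgeSegment v w' t')) :
    (P < p ∧ p < P') ∨ (P' < p ∧ p < P) := by
  refine lt_and_lt_or_lt_and_lt_of_uIcc_inter_uIcc_subset hPp hP'p fun x ⟨hx, hx'⟩ => ?_
  refine hinj (uIcc_subset_Icc hP hp hx) hp ?_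
  rw [hFp]
  exact eq_vertexPoint_of_mem_edgeSegment hvw hww' (hmaps hx) (hmaps' hx')

end Arcs

theorem exists_interior_vertex_and_end_mem_edgeSegment {V : Type*} {G : SimpleGraph V}
    {F : ℝ → V → ℝ} (hF : Continuous F) (hinj : InjOn F (Icc 0 1))
    (hFG : ∀ s, F s ∈ GraphRealization G) {v : V} {w : Fin 3 → V} (hw : Injective w)
    (hvw : ∀ i, v ≠ w i) {t : Fin 3 → ℝ} (ht : ∀ i, t i ∈ Ioo 0 1) {P : Fin 3 → ℝ}
    (hP : ∀ i, P i ∈ Icc 0 1) (hFP : ∀ i, F (P i) = edgePoint v (w i) (t i)) :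
    (∃ p ∈ Ioo 0 1, F p = vertexPoint v) ∧
      ∃ e : ℝ, (e = 0 ∨ e = 1) ∧ ∃ i, ∃ r ∈ Icc 0 (t i), F e = edgePoint v (w i) r := by
  choose q hq u hu hFq hmaps hend using fun i =>
    exists_mapsTo_edgeSegment hF hinj hFG (hvw i) (ht i).1.le (ht i).2 (hP i) (hFP i)
  have hFq_zero : ∀ i, u i = 0 → F (q i) = vertexPoint v := fun i hi => by
    rw [hFq, hi, edgePoint_zero]
  have hu_zero : ∀ i j, i ≠ j → q i = q j → u i = 0 := fun i j hij h =>
    eq_zero_of_edgePoint_eq (hvw i) (hw.ne hij) (by rw [← hFq, ← hFq, h])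
  have hq_eq : ∀ i j, u i = 0 → u j = 0 → q i = q j := fun i j hi hj =>
    hinj (hq i) (hq j) (by rw [hFq_zero i hi, hFq_zero j hj])
  have hside : ∀ i j, i ≠ j → u i = 0 → u j = 0 →
      (P i < q i ∧ q i < P j) ∨ (P j < q i ∧ q i < P i) := by
    have hPq : ∀ k, u k = 0 → P k ≠ q k := fun k hk h =>
      edgePoint_ne_vertexPoint (hvw k) (ht k).1.ne' (by rw [← hFP, h, hFq_zero k hk])
    intro i j hij hi hj
    have hqji := hq_eq j i hj hi
    exact lt_and_lt_or_of_mapsTo_edgeSegment hinj (hvw i) (hw.ne hij) (hP i) (hq i)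
      (hFq_zero i hi) (hPq i hi) (hqji ▸ hPq j hj) (hmaps i) (hqji ▸ hmaps j)
  constructor
  · by_contra! hno
    have h01 : ∀ i, q i = 0 ∨ q i = 1 := fun i => (hend i).elim (fun hi => by
      by_contra! hne
      exact hno (q i) ⟨(hq i).1.lt_of_ne hne.1.symm, (hq i).2.lt_of_ne hne.2⟩ (hFq_zero i hi)) id
    obtain ⟨i, j, hij, h⟩ := exists_ne_apply_eq_of_forall_eq_or_eq q h01
    have hi := hu_zero i j hij h
    have hj := hu_zero j i hij.symm h.symm
    obtain ⟨h₁, h₂⟩ | ⟨h₁, h₂⟩ := hside i j hij hi hj <;>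
      exact hno (q i) ⟨by linarith [(hP i).1, (hP j).1], by linarith [(hP i).2, (hP j).2]⟩
        (hFq_zero i hi)
  · by_contra! hno
    have hu0 : ∀ i, u i = 0 := fun i =>
      (hend i).resolve_right fun h => hno (q i) h i (u i) (hu i) (hFq i)
    obtain ⟨i, j, hij, h⟩ := exists_ne_apply_eq_of_forall_eq_or_eq
      (fun i => decide (P i < q i)) (fun i => (Bool.eq_false_or_eq_true _).symm)
    simp only [decide_eq_decide, hq_eq j i (hu0 j) (hu0 i)] at h
    obtain ⟨h₁, h₂⟩ | ⟨h₁, h₂⟩ := hside i j hij (hu0 i) (hu0 j)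
    · exact h₂.not_gt (h.1 h₁)
    · exact h₂.not_gt (h.2 h₁)

/-- If `v` is a vertex of `G` of degree at least 3 and `x₀, x₁, x₂` are
interior points of three distinct edges of `G` incident with `v` (the point `xᵢ` lying
on the edge from `v` to `w i` at parameter `t i`), then every arc `f` in `|G|`
containing the three points has `v` in its interior, and one of its endpoints lies in
`[v,x₀] ∪ [v,x₁] ∪ [v,x₂]`. -/
theorem statement19 {V : Type*} (G : SimpleGraph V) (v : V)
    (w : Fin 3 → V) (hw : Function.Injective w) (hadj : ∀ i, G.Adj v (w i))
    (t : Fin 3 → ℝ) (ht : ∀ i, t i ∈ Set.Ioo (0 : ℝ) 1)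
    (f : ↥unitInterval → ↥(GraphRealization G)) (hf : Topology.IsEmbedding f)
    (hx : ∀ i : Fin 3, ∃ s, (f s : V → ℝ) = edgePoint v (w i) (t i)) :
    (∃ s : ↥unitInterval, s ≠ 0 ∧ s ≠ 1 ∧ (f s : V → ℝ) = vertexPoint v) ∧
    ∃ ε : ↥unitInterval, (ε = 0 ∨ ε = 1) ∧
      ∃ (i : Fin 3) (r : ℝ), r ∈ Set.Icc (0 : ℝ) (t i) ∧
        (f ε : V → ℝ) = edgePoint v (w i) r := by
  set F : ℝ → V → ℝ := fun s => f (projIcc 0 1 zero_le_one s)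
  have hFf (s : unitInterval) : F s = f s := by simp only [F, projIcc_val]
  have hinj : InjOn F (Icc 0 1) := fun s hs s' hs' h => by
    simpa [projIcc_of_mem _ hs, projIcc_of_mem _ hs'] using hf.injective (Subtype.ext h)
  choose P hP using hx
  obtain ⟨⟨p, hp, hFp⟩, e, he, i, r, hr, hFe⟩ :=
    exists_interior_vertex_and_end_mem_edgeSegment
      (continuous_subtype_val.comp (hf.continuous.comp continuous_projIcc)) hinj
      (fun s => (f _).2) hw (fun i => (hadj i).ne) ht (fun i => (P i).2)
      (fun i => (hFf (P i)).trans (hP i))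
  refine ⟨⟨⟨p, Ioo_subset_Icc_self hp⟩, ?_, ?_, (hFf _).symm.trans hFp⟩, ?_⟩
  · exact fun h => hp.1.ne' (congrArg Subtype.val h)
  · exact fun h => hp.2.ne (congrArg Subtype.val h)
  · rcases he with rfl | rfl
    · exact ⟨0, Or.inl rfl, i, r, hr, (hFf 0).symm.trans hFe⟩
    · exact ⟨1, Or.inr rfl, i, r, hr, (hFf 1).symm.trans hFe⟩
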